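/- arXiv:2506.12772 — 2 statements merged into one kernel-verified Lean document; each statement's English description precedes it below -/
import Mathlib

section
/- For any information-lossless finite-state encoder with s states, input alphabet of size α, fixed initial state z, and block length ℓ, the generalized Kraft sum K(z) = Σ_{w∈X^ℓ} 2^{-L[f(z,w)]} over all input blocks w of length ℓ satisfies K(z) ≤ s·(1 + log₂(1 + α^ℓ/s)). -/
/-!
Group the blocks by their output length `L`. At most `s·2^j` blocks have `L = j`, since the
final state and the `j` output bits determine the block, so the blocks with `L < c` contribute
at most `∑_{j<c} s·2^j·(2^{-j} - 2^{-c})` beyond the uniform bound `2^{-c}` per block, which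
gives `K ≤ c·s - s + (α^ℓ + s)·2^{-c}`. Taking `c = ⌈log₂(1 + α^ℓ/s)⌉` makes the last term at
most `s`, and `c ≤ 1 + log₂(1 + α^ℓ/s)`.
-/

open Finset

theorem card_filter_length_eq_le_of_injective {α β : Type*} [Fintype α] [Fintype β]
    {f : α → List Bool} {g : α → β} (hfg : Function.Injective fun a => (f a, g a)) (j : ℕ) :
    #{a | (f a).length = j} ≤ Fintype.card β * 2 ^ j := by
  have hinj : Function.Injective fun a : {a // (f a).length = j} =>
      ((⟨f a, a.2⟩ : List.Vector Bool j), g a) := by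
    intro a b hab
    simp only [Prod.mk.injEq, Subtype.mk.injEq] at hab
    exact Subtype.ext (hfg (Prod.ext hab.1 hab.2))
  simpa [Fintype.card_subtype, card_vector, mul_comm] using
    Fintype.card_le_of_injective (β := List.Vector Bool j × β) _ hinj

theorem sum_inv_two_pow_le_of_card_fiber_le {ι : Type*} [Fintype ι] (L : ι → ℕ) {s : ℝ}
    (hL : ∀ j, (#{i | L i = j} : ℝ) ≤ s * 2 ^ j) (c : ℕ) :
    ∑ i, ((2 : ℝ) ^ L i)⁻¹ ≤ c * s - s + (Fintype.card ι + s) * ((2 : ℝ) ^ c)⁻¹ := by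
  set φ : ℕ → ℝ := fun j => ((2 : ℝ) ^ j)⁻¹ - ((2 : ℝ) ^ c)⁻¹ with hφ
  have hφ_nonneg : ∀ j ∈ range c, 0 ≤ φ j := fun j hj =>
    sub_nonneg.2 <| inv_anti₀ (by positivity) <|
      pow_le_pow_right₀ one_le_two (mem_range.1 hj).le
  have hpt : ∀ i, ((2 : ℝ) ^ L i)⁻¹ ≤ ((2 : ℝ) ^ c)⁻¹ + if L i ∈ range c then φ (L i) else 0 := by
    intro i
    split_ifs with h
    · simp [hφ]
    · rw [add_zero]
      exact inv_anti₀ (by positivity) <| pow_le_pow_right₀ one_le_two (by simpa using h)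
  have hgeom : ∑ j ∈ range c, s * 2 ^ j * φ j = c * s - s + s * ((2 : ℝ) ^ c)⁻¹ := by
    have hsum_pow : ∑ j ∈ range c, (2 : ℝ) ^ j = 2 ^ c - 1 := by
      rw [geom_sum_eq (by norm_num) c]; norm_num
    simp only [hφ, mul_sub, mul_assoc,
      mul_inv_cancel₀ (pow_ne_zero _ two_ne_zero : (2 : ℝ) ^ _ ≠ 0), sum_sub_distrib, sum_const, card_range, ← sum_mul, ← mul_sum, hsum_pow]
    field_simp
    ring
  calc ∑ i, ((2 : ℝ) ^ L i)⁻¹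
      ≤ ∑ i, (((2 : ℝ) ^ c)⁻¹ + if L i ∈ range c then φ (L i) else 0) := sum_le_sum fun i _ => hpt i
    _ = Fintype.card ι * ((2 : ℝ) ^ c)⁻¹ + ∑ j ∈ range c, (#{i | L i = j} : ℝ) * φ j := by
      rw [sum_add_distrib, ← sum_filter, ← sum_fiberwise_eq_sum_filter']
      simp [sum_const, card_univ, nsmul_eq_mul]
    _ ≤ Fintype.card ι * ((2 : ℝ) ^ c)⁻¹ + ∑ j ∈ range c, s * 2 ^ j * φ j := by
      gcongr with j hj
      · exact hφ_nonneg j hj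
      · exact hL j
    _ = c * s - s + (Fintype.card ι + s) * ((2 : ℝ) ^ c)⁻¹ := by rw [hgeom]; ring

theorem le_two_pow_ceil_logb {x : ℝ} (hx : 0 < x) : x ≤ 2 ^ ⌈Real.logb 2 x⌉₊ := by
  rw [← Real.rpow_natCast, ← Real.logb_le_iff_le_rpow one_lt_two hx]
  exact Nat.le_ceil _

theorem stmt_0_general {X Z : Type} [Fintype X] [Fintype Z] {ℓ : ℕ}
    (f : Z → (Fin ℓ → X) → List Bool) (g : Z → (Fin ℓ → X) → Z)
    (hIL : ∀ z : Z, Function.Injective (fun w : Fin ℓ → X => (f z w, g z w)))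
    (z : Z) :
    ∑ w : Fin ℓ → X, (2 : ℝ) ^ (-((f z w).length : ℝ)) ≤
      (Fintype.card Z : ℝ) *
        (1 + Real.logb 2 (1 + (Fintype.card X : ℝ) ^ ℓ / (Fintype.card Z : ℝ))) := by
  set s : ℝ := (Fintype.card Z : ℝ)
  set N : ℝ := (Fintype.card X : ℝ) ^ ℓ
  have hs : 0 < s := Nat.cast_pos.2 (Fintype.card_pos_iff.2 ⟨z⟩)
  have hx : 1 ≤ 1 + N / s := le_add_of_nonneg_right (by positivity)
  set c := ⌈Real.logb 2 (1 + N / s)⌉₊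
  have hc : (c : ℝ) ≤ 1 + Real.logb 2 (1 + N / s) := by
    linarith [Nat.ceil_lt_add_one (Real.logb_nonneg one_lt_two hx)]
  have hNs : (N + s) * ((2 : ℝ) ^ c)⁻¹ ≤ s := by
    rw [mul_inv_le_iff₀ (by positivity)]
    calc N + s = s * (1 + N / s) := by field_simp; ring
      _ ≤ s * 2 ^ c := by gcongr; exact le_two_pow_ceil_logb (by positivity)
  have hfiber (j : ℕ) : (#{w | (f z w).length = j} : ℝ) ≤ s * 2 ^ j := by
    simp only [s]
    exact_mod_cast card_filter_length_eq_le_of_injective (hIL z) j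
  have hK := sum_inv_two_pow_le_of_card_fiber_le (fun w => (f z w).length) hfiber c
  calc ∑ w, (2 : ℝ) ^ (-((f z w).length : ℝ))
      = ∑ w, ((2 : ℝ) ^ (f z w).length)⁻¹ := by simp [Real.rpow_neg]
    _ ≤ c * s - s + (N + s) * ((2 : ℝ) ^ c)⁻¹ := by simpa [N, Fintype.card_fun] using hK
    _ ≤ c * s := by linarith
    _ ≤ s * (1 + Real.logb 2 (1 + N / s)) := by rw [mul_comm]; gcongr

/-- **Generalized Kraft inequality for information-lossless finite-state encoders.**
For an IL finite-state encoder with state set `Z` (of size `s`), input alphabet `X`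
(of size `α`), block length `ℓ`, output function `f` (giving the output bit string
produced on an input block from a given starting state) and final-state map `g`,
information losslessness (for fixed initial state, the pair (output bits, final state)
determines the input block) implies
`K(z) = ∑_{w ∈ X^ℓ} 2^{-L[f(z,w)]} ≤ s·(1 + log₂(1 + α^ℓ/s))`. -/
theorem stmt_0 {X Z : Type} [Fintype X] [Fintype Z] [Nonempty Z] {ℓ : ℕ}
    (f : Z → (Fin ℓ → X) → List Bool) (g : Z → (Fin ℓ → X) → Z)
    (hIL : ∀ z : Z, Function.Injective (fun w : Fin ℓ → X => (f z w, g z w)))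
    (z : Z) :
    ∑ w : Fin ℓ → X, (2 : ℝ) ^ (-((f z w).length : ℝ)) ≤
      (Fintype.card Z : ℝ) *
        (1 + Real.logb 2 (1 + (Fintype.card X : ℝ) ^ ℓ / (Fintype.card Z : ℝ))) :=
  stmt_0_general f g hIL z
end

section
/- For every finite sequence x^n over a finite alphabet X and all positive integers d₁, d₂ with d₁ + d₂ ≤ n, the cyclic sliding-window empirical entropy satisfies Ĥ_csw(X^{d₁+d₂})[x^n] ≤ Ĥ_csw(X^{d₁})[x^n] + Ĥ_csw(X^{d₂})[x^n]. -/
/-- The cyclic sliding-window empirical distribution of `d`-blocks of `x^n`. -/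
noncomputable def cswDist {X : Type} [Fintype X] [DecidableEq X]
    (x : ℕ → X) (n d : ℕ) (w : Fin d → X) : ℝ :=
  (((Finset.range n).filter fun i => ∀ j : Fin d, x ((i + (j : ℕ)) % n) = w j).card : ℝ) / n

/-- Cyclic sliding-window empirical entropy of `d`-blocks of `x^n` (in bits). -/
noncomputable def Hcsw {X : Type} [Fintype X] [DecidableEq X] (x : ℕ → X) (n d : ℕ) : ℝ :=
  -∑ w : Fin d → X, cswDist x n d w * Real.logb 2 (cswDist x n d w)

private lemma log_ineq (p q : ℝ) (hp : 0 ≤ p) (hq : 0 ≤ q) (himp : p ≠ 0 → q ≠ 0) :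
    p * Real.log q - p * Real.log p ≤ q - p := by
  rcases hp.eq_or_lt with h0 | hp'
  · simp [← h0, hq]
  · have hq' : 0 < q := lt_of_le_of_ne hq (Ne.symm (himp hp'.ne'))
    have h1 := Real.log_le_sub_one_of_pos (div_pos hq' hp')
    rw [Real.log_div hq'.ne' hp'.ne'] at h1
    have h3 : p * (q / p - 1) = q - p := by field_simp
    nlinarith [mul_le_mul_of_nonneg_left h1 hp'.le]

/-- Subadditivity of Shannon entropy (natural log form). -/
private lemma entropy_subadd_log {A B : Type} [Fintype A] [Fintype B] (p : A × B → ℝ)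
    (hp : ∀ ab, 0 ≤ p ab) (hs : ∑ ab, p ab = 1) :
    ∑ a, (∑ b, p (a, b)) * Real.log (∑ b, p (a, b)) +
      ∑ b, (∑ a, p (a, b)) * Real.log (∑ a, p (a, b)) ≤ ∑ ab, p ab * Real.log (p ab) := by
  set p₁ : A → ℝ := fun a => ∑ b, p (a, b) with hp₁
  set p₂ : B → ℝ := fun b => ∑ a, p (a, b) with hp₂
  have hp₁n : ∀ a, 0 ≤ p₁ a := fun a => Finset.sum_nonneg fun b _ => hp _
  have hp₂n : ∀ b, 0 ≤ p₂ b := fun b => Finset.sum_nonneg fun a _ => hp _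
  have hle₁ : ∀ a b, p (a, b) ≤ p₁ a := fun a b =>
    Finset.single_le_sum (fun b _ => hp (a, b)) (Finset.mem_univ b)
  have hle₂ : ∀ a b, p (a, b) ≤ p₂ b := fun a b =>
    Finset.single_le_sum (fun a _ => hp (a, b)) (Finset.mem_univ a)
  have e1 : ∑ a, p₁ a * Real.log (p₁ a) = ∑ ab : A × B, p ab * Real.log (p₁ ab.1) := by
    rw [Fintype.sum_prod_type]
    refine Finset.sum_congr rfl fun a _ => ?_
    show p₁ a * Real.log (p₁ a) = ∑ y : B, p (a, y) * Real.log (p₁ a)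
    rw [← Finset.sum_mul]
  have e2 : ∑ b, p₂ b * Real.log (p₂ b) = ∑ ab : A × B, p ab * Real.log (p₂ ab.2) := by
    rw [Fintype.sum_prod_type_right]
    refine Finset.sum_congr rfl fun b _ => ?_
    show p₂ b * Real.log (p₂ b) = ∑ y : A, p (y, b) * Real.log (p₂ b)
    rw [← Finset.sum_mul]
  have hs1 : ∑ a, p₁ a = 1 := by rw [hp₁, ← Fintype.sum_prod_type, hs]
  have hs2 : ∑ b, p₂ b = 1 := by rw [hp₂, ← Fintype.sum_prod_type_right, hs]
  have key : ∑ ab : A × B,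
      (p ab * Real.log (p₁ ab.1) + p ab * Real.log (p₂ ab.2) - p ab * Real.log (p ab))
      ≤ ∑ ab : A × B, (p₁ ab.1 * p₂ ab.2 - p ab) := by
    apply Finset.sum_le_sum
    intro ab _
    rcases (hp ab).eq_or_lt with h0 | hpos
    · rw [← h0]
      simpa using mul_nonneg (hp₁n ab.1) (hp₂n ab.2)
    · have h1 : 0 < p₁ ab.1 := lt_of_lt_of_le hpos (hle₁ ab.1 ab.2)
      have h2 : 0 < p₂ ab.2 := lt_of_lt_of_le hpos (hle₂ ab.1 ab.2)
      have hk := log_ineq (p ab) (p₁ ab.1 * p₂ ab.2) (hp ab)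
        (mul_nonneg h1.le h2.le) (fun _ => (mul_pos h1 h2).ne')
      rw [Real.log_mul h1.ne' h2.ne', mul_add] at hk
      linarith
  have hr : ∑ ab : A × B, (p₁ ab.1 * p₂ ab.2 - p ab) = 0 := by
    rw [Finset.sum_sub_distrib, hs]
    have hprod : ∑ ab : A × B, p₁ ab.1 * p₂ ab.2 = (∑ a, p₁ a) * (∑ b, p₂ b) := by
      rw [Finset.sum_mul_sum, Fintype.sum_prod_type]
    rw [hprod, hs1, hs2]; ring
  rw [Finset.sum_sub_distrib, Finset.sum_add_distrib, ← e1, ← e2] at key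
  linarith

private lemma sum_count {X : Type} [Fintype X] [DecidableEq X] (x : ℕ → X) (n d : ℕ) :
    ∑ w : Fin d → X,
      ((Finset.range n).filter fun i => ∀ j : Fin d, x ((i + (j : ℕ)) % n) = w j).card = n := by
  have hfib := Finset.card_eq_sum_card_fiberwise
    (f := fun i => fun j : Fin d => x ((i + (j : ℕ)) % n)) (s := Finset.range n)
    (t := Finset.univ) (fun i _ => Finset.mem_univ _)
  rw [Finset.card_range] at hfib
  symm
  conv_lhs => rw [hfib]
  apply Finset.sum_congr rfl
  intro w _
  congr 1
  apply Finset.filter_congr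
  intro i _
  simp [funext_iff]

/-- splitting the block condition -/
private lemma split_cond {X : Type} [Fintype X] [DecidableEq X] (x : ℕ → X) (n d₁ d₂ : ℕ)
    (i : ℕ) (a : Fin d₁ → X) (b : Fin d₂ → X) :
    (∀ j : Fin (d₁ + d₂), x ((i + (j : ℕ)) % n) = Sum.elim a b (finSumFinEquiv.symm j)) ↔
      ((∀ j : Fin d₁, x ((i + (j : ℕ)) % n) = a j) ∧
       (∀ j : Fin d₂, x ((i + (d₁ + (j : ℕ))) % n) = b j)) := by
  constructor
  · intro hA
    refine ⟨fun j => ?_, fun j => ?_⟩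
    · have := hA (Fin.castAdd d₂ j)
      simpa [finSumFinEquiv_symm_apply_castAdd, Fin.coe_castAdd] using this
    · have := hA (Fin.natAdd d₁ j)
      simpa [finSumFinEquiv_symm_apply_natAdd, Fin.coe_natAdd] using this
  · rintro ⟨h1, h2⟩ j
    obtain ⟨s, rfl⟩ : ∃ s, finSumFinEquiv s = j := ⟨finSumFinEquiv.symm j, Equiv.apply_symm_apply _ _⟩
    cases s with
    | inl j₁ =>
        rw [finSumFinEquiv_apply_left]
        simpa [finSumFinEquiv_symm_apply_castAdd, Fin.coe_castAdd] using h1 j₁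
    | inr j₂ =>
        rw [finSumFinEquiv_apply_right]
        simpa [finSumFinEquiv_symm_apply_natAdd, Fin.coe_natAdd] using h2 j₂

/-- shift invariance of the count -/
private lemma shift_count {X : Type} [Fintype X] [DecidableEq X] (x : ℕ → X) (n d₁ d₂ : ℕ)
    (hn : 0 < n) (hd : d₁ ≤ n) (b : Fin d₂ → X) :
    ((Finset.range n).filter fun i => ∀ j : Fin d₂, x ((i + (d₁ + (j : ℕ))) % n) = b j).card =
    ((Finset.range n).filter fun i => ∀ j : Fin d₂, x ((i + (j : ℕ)) % n) = b j).card := by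
  apply Finset.card_nbij' (fun i => (i + d₁) % n) (fun i => (i + (n - d₁)) % n)
  · intro i hi
    simp only [Finset.mem_coe, Finset.mem_filter, Finset.mem_range] at hi ⊢
    refine ⟨Nat.mod_lt _ hn, fun j => ?_⟩
    rw [Nat.mod_add_mod, add_assoc]
    exact hi.2 j
  · intro i hi
    simp only [Finset.mem_coe, Finset.mem_filter, Finset.mem_range] at hi ⊢
    refine ⟨Nat.mod_lt _ hn, fun j => ?_⟩
    rw [Nat.mod_add_mod]
    have : i + (n - d₁) + (d₁ + (j : ℕ)) = i + (j : ℕ) + n := by omega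
    rw [this, Nat.add_mod_right]
    exact hi.2 j
  · intro i hi
    simp only [Finset.mem_coe, Finset.mem_filter, Finset.mem_range] at hi
    beta_reduce
    rw [Nat.mod_add_mod]
    have : i + d₁ + (n - d₁) = i + n := by omega
    rw [this, Nat.add_mod_right, Nat.mod_eq_of_lt hi.1]
  · intro i hi
    simp only [Finset.mem_coe, Finset.mem_filter, Finset.mem_range] at hi
    beta_reduce
    rw [Nat.mod_add_mod]
    have : i + (n - d₁) + d₁ = i + n := by omega
    rw [this, Nat.add_mod_right, Nat.mod_eq_of_lt hi.1]

private lemma marg1_count {X : Type} [Fintype X] [DecidableEq X] (x : ℕ → X) (n d₁ d₂ : ℕ)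
    (a : Fin d₁ → X) :
    ∑ b : Fin d₂ → X,
      ((Finset.range n).filter fun i =>
        (∀ j : Fin d₁, x ((i + (j : ℕ)) % n) = a j) ∧
        (∀ j : Fin d₂, x ((i + (d₁ + (j : ℕ))) % n) = b j)).card =
    ((Finset.range n).filter fun i => ∀ j : Fin d₁, x ((i + (j : ℕ)) % n) = a j).card := by
  have hfib := Finset.card_eq_sum_card_fiberwise
    (f := fun i => fun j : Fin d₂ => x ((i + (d₁ + (j : ℕ))) % n))
    (s := (Finset.range n).filter fun i => ∀ j : Fin d₁, x ((i + (j : ℕ)) % n) = a j)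
    (t := Finset.univ) (fun i _ => Finset.mem_univ _)
  rw [hfib]
  apply Finset.sum_congr rfl
  intro b _
  rw [Finset.filter_filter]
  congr 1
  apply Finset.filter_congr
  intro i _
  simp [funext_iff]

private lemma marg2_count {X : Type} [Fintype X] [DecidableEq X] (x : ℕ → X) (n d₁ d₂ : ℕ)
    (b : Fin d₂ → X) :
    ∑ a : Fin d₁ → X,
      ((Finset.range n).filter fun i =>
        (∀ j : Fin d₁, x ((i + (j : ℕ)) % n) = a j) ∧
        (∀ j : Fin d₂, x ((i + (d₁ + (j : ℕ))) % n) = b j)).card =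
    ((Finset.range n).filter fun i => ∀ j : Fin d₂, x ((i + (d₁ + (j : ℕ))) % n) = b j).card := by
  have hfib := Finset.card_eq_sum_card_fiberwise
    (f := fun i => fun j : Fin d₁ => x ((i + (j : ℕ)) % n))
    (s := (Finset.range n).filter fun i => ∀ j : Fin d₂, x ((i + (d₁ + (j : ℕ))) % n) = b j)
    (t := Finset.univ) (fun i _ => Finset.mem_univ _)
  rw [hfib]
  apply Finset.sum_congr rfl
  intro a _
  rw [Finset.filter_filter]
  congr 1
  apply Finset.filter_congr
  intro i _
  simp [funext_iff, and_comm]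

/-- **Subadditivity of the cyclic sliding-window empirical entropy:**
`Ĥ_csw(X^{d₁+d₂})[x^n] ≤ Ĥ_csw(X^{d₁})[x^n] + Ĥ_csw(X^{d₂})[x^n]`. -/
theorem stmt_2 {X : Type} [Fintype X] [DecidableEq X]
    (x : ℕ → X) (n d₁ d₂ : ℕ) (hd₁ : 0 < d₁) (hd₂ : 0 < d₂) (h : d₁ + d₂ ≤ n) :
    Hcsw x n (d₁ + d₂) ≤ Hcsw x n d₁ + Hcsw x n d₂ := by
  have hn : 0 < n := lt_of_lt_of_le (by omega) h
  have hnR : (0:ℝ) < (n:ℝ) := by exact_mod_cast hn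
  -- the pairing equivalence
  set E : ((Fin d₁ → X) × (Fin d₂ → X)) ≃ (Fin (d₁ + d₂) → X) :=
    (Equiv.sumArrowEquivProdArrow (Fin d₁) (Fin d₂) X).symm.trans
      (Equiv.arrowCongr finSumFinEquiv (Equiv.refl X)) with hEdef
  have hE : ∀ (a : Fin d₁ → X) (b : Fin d₂ → X) (j : Fin (d₁ + d₂)),
      E (a, b) j = Sum.elim a b (finSumFinEquiv.symm j) := fun a b j => rfl
  -- the joint distribution
  set p : ((Fin d₁ → X) × (Fin d₂ → X)) → ℝ :=
    fun ab => cswDist x n (d₁ + d₂) (E ab) with hpdef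
  have hpE : ∀ ab, p ab =
      (((Finset.range n).filter fun i =>
        (∀ j : Fin d₁, x ((i + (j : ℕ)) % n) = ab.1 j) ∧
        (∀ j : Fin d₂, x ((i + (d₁ + (j : ℕ))) % n) = ab.2 j)).card : ℝ) / n := by
    rintro ⟨a, b⟩
    show cswDist x n (d₁ + d₂) (E (a, b)) = _
    unfold cswDist
    have hfil : ((Finset.range n).filter fun i =>
        ∀ j : Fin (d₁ + d₂), x ((i + (j : ℕ)) % n) = E (a, b) j)
        = ((Finset.range n).filter fun i =>
          (∀ j : Fin d₁, x ((i + (j : ℕ)) % n) = a j) ∧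
          (∀ j : Fin d₂, x ((i + (d₁ + (j : ℕ))) % n) = b j)) := by
      apply Finset.filter_congr
      intro i _
      simp only [hE]
      exact split_cond x n d₁ d₂ i a b
    rw [hfil]
  have hp0 : ∀ ab, 0 ≤ p ab := by
    intro ab
    rw [hpdef]
    unfold cswDist
    positivity
  -- total mass one
  have hsum : ∑ ab, p ab = 1 := by
    rw [hpdef]
    rw [Fintype.sum_equiv E _ (fun w => cswDist x n (d₁ + d₂) w) (fun ab => rfl)]
    unfold cswDist
    rw [← Finset.sum_div]
    rw [div_eq_one_iff_eq hnR.ne']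
    exact_mod_cast sum_count x n (d₁ + d₂)
  -- marginals
  have hm1 : ∀ a : Fin d₁ → X, ∑ b, p (a, b) = cswDist x n d₁ a := by
    intro a
    unfold cswDist
    calc ∑ b, p (a, b)
        = ∑ b : Fin d₂ → X, (((Finset.range n).filter fun i =>
            (∀ j : Fin d₁, x ((i + (j : ℕ)) % n) = a j) ∧
            (∀ j : Fin d₂, x ((i + (d₁ + (j : ℕ))) % n) = b j)).card : ℝ) / n := by
          exact Finset.sum_congr rfl fun b _ => hpE (a, b)
      _ = _ := by
          rw [← Finset.sum_div]
          congr 1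
          exact_mod_cast marg1_count x n d₁ d₂ a
  have hm2 : ∀ b : Fin d₂ → X, ∑ a, p (a, b) = cswDist x n d₂ b := by
    intro b
    unfold cswDist
    calc ∑ a, p (a, b)
        = ∑ a : Fin d₁ → X, (((Finset.range n).filter fun i =>
            (∀ j : Fin d₁, x ((i + (j : ℕ)) % n) = a j) ∧
            (∀ j : Fin d₂, x ((i + (d₁ + (j : ℕ))) % n) = b j)).card : ℝ) / n := by
          exact Finset.sum_congr rfl fun a _ => hpE (a, b)
      _ = _ := by
          rw [← Finset.sum_div]
          congr 1
          exact_mod_cast (marg2_count x n d₁ d₂ b).trans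
            (shift_count x n d₁ d₂ hn (le_trans (by omega) h) b)
  -- rewrite the three entropies
  have hH : Hcsw x n (d₁ + d₂) = -∑ ab, p ab * Real.logb 2 (p ab) := by
    unfold Hcsw
    congr 1
    exact (Fintype.sum_equiv E _ _ (fun ab => rfl)).symm
  have hH1 : Hcsw x n d₁ = -∑ a, (∑ b, p (a, b)) * Real.logb 2 (∑ b, p (a, b)) := by
    unfold Hcsw
    congr 1
    exact Finset.sum_congr rfl fun a _ => by rw [hm1 a]
  have hH2 : Hcsw x n d₂ = -∑ b, (∑ a, p (a, b)) * Real.logb 2 (∑ a, p (a, b)) := by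
    unfold Hcsw
    congr 1
    exact Finset.sum_congr rfl fun b _ => by rw [hm2 b]
  rw [hH, hH1, hH2]
  -- reduce logb to log
  have hkey := entropy_subadd_log p hp0 hsum
  have hlog2 : (0:ℝ) < Real.log 2 := Real.log_pos one_lt_two
  have c1 : ∑ ab, p ab * Real.logb 2 (p ab) = (∑ ab, p ab * Real.log (p ab)) / Real.log 2 := by
    rw [Finset.sum_div]
    exact Finset.sum_congr rfl fun ab _ => by rw [Real.logb, mul_div_assoc]
  have c2 : ∑ a, (∑ b, p (a, b)) * Real.logb 2 (∑ b, p (a, b)) =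
      (∑ a, (∑ b, p (a, b)) * Real.log (∑ b, p (a, b))) / Real.log 2 := by
    rw [Finset.sum_div]
    exact Finset.sum_congr rfl fun a _ => by rw [Real.logb, mul_div_assoc]
  have c3 : ∑ b, (∑ a, p (a, b)) * Real.logb 2 (∑ a, p (a, b)) =
      (∑ b, (∑ a, p (a, b)) * Real.log (∑ a, p (a, b))) / Real.log 2 := by
    rw [Finset.sum_div]
    exact Finset.sum_congr rfl fun b _ => by rw [Real.logb, mul_div_assoc]
  rw [c1, c2, c3]
  have hfin := (div_le_div_iff_of_pos_right hlog2).mpr hkey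
  rw [add_div] at hfin
  linarith
end
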